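/- arXiv:1506.03721 — 5 statements merged into one kernel-verified Lean document; each statement's English description precedes it below -/
import Mathlib

section
/- Let 0 < s < 1, K > 1, and let x, y > 0 be real numbers with |x − y| < x/K. Then |x^s − y^s| ≤ (s/(K−1)^{1−s}) · |x − y|^s. Moreover, if K > 1 + s^{1/(1−s)} then s/(K−1)^{1−s} < 1. -/
/-!
The map `t ↦ t ^ s` is concave, so `|x ^ s - y ^ s|` is at most its slope `s * m ^ (s - 1)` at
`m = min x y` times `|x - y|`. The hypothesis `|x - y| < x / K` gives `m > (K - 1) * |x - y|`, and
since `s - 1 ≤ 0` this bounds the slope by `s * ((K - 1) * |x - y|) ^ (s - 1)`.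
-/

open Real

namespace Real

lemma rpow_sub_rpow_le_mul_rpow_sub_one {s m M : ℝ} (hs0 : 0 ≤ s) (hs1 : s ≤ 1) (hm : 0 < m)
    (hM : 0 ≤ M) : M ^ s - m ^ s ≤ s * m ^ (s - 1) * (M - m) := by
  -- Bernoulli's inequality for `M / m = 1 + (M - m) / m`.
  have hbernoulli : (1 + (M - m) / m) ^ s ≤ 1 + s * ((M - m) / m) :=
    rpow_one_add_le_one_add_mul_self (by rw [le_div_iff₀ hm]; linarith) hs0 hs1
  have hratio : 1 + (M - m) / m = M / m := by field_simp; ring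
  have hsplit : M ^ s = m ^ s * (1 + (M - m) / m) ^ s := by
    rw [hratio, ← mul_rpow hm.le (by positivity), mul_div_cancel₀ _ hm.ne']
  calc M ^ s - m ^ s ≤ m ^ s * (1 + s * ((M - m) / m)) - m ^ s := by
        rw [hsplit]; gcongr
    _ = s * m ^ (s - 1) * (M - m) := by
        rw [rpow_sub_one hm.ne']
        field_simp
        ring

lemma abs_rpow_sub_rpow_le {s x y : ℝ} (hs0 : 0 ≤ s) (hs1 : s ≤ 1) (hxy : 0 < min x y) :
    |x ^ s - y ^ s| ≤ s * (min x y) ^ (s - 1) * |x - y| := by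
  wlog h : x ≤ y generalizing x y
  · rw [abs_sub_comm, min_comm, abs_sub_comm x]
    exact this (by rwa [min_comm]) (le_of_not_ge h)
  have hx : 0 < x := (lt_min_iff.mp hxy).1
  rw [min_eq_left h, abs_sub_comm, abs_of_nonneg (sub_nonneg.mpr (rpow_le_rpow hx.le h hs0)),
    abs_sub_comm, abs_of_nonneg (sub_nonneg.mpr h)]
  exact rpow_sub_rpow_le_mul_rpow_sub_one hs0 hs1 hx (by linarith)

lemma rpow_sub_one_mul_le_of_mul_le {s c d m : ℝ} (hs : s ≤ 1) (hc : 0 < c) (hd : 0 ≤ d)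
    (hcd : c * d ≤ m) : m ^ (s - 1) * d ≤ d ^ s / c ^ (1 - s) := by
  rcases hd.eq_or_lt with rfl | hd
  · simp only [mul_zero]
    positivity
  calc m ^ (s - 1) * d ≤ (c * d) ^ (s - 1) * d :=
        mul_le_mul_of_nonneg_right
          (rpow_le_rpow_of_nonpos (by positivity) hcd (sub_nonpos.mpr hs)) hd.le
    _ = d ^ s / c ^ (1 - s) := by
        rw [mul_rpow hc.le hd.le, rpow_sub_one hd.ne', show s - 1 = -(1 - s) by ring,
          rpow_neg hc.le]
        field_simp

end Real

lemma mul_abs_sub_lt_min_of_abs_sub_lt {K x y : ℝ} (hK : 0 < K) (hxy : |x - y| < x / K) :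
    (K - 1) * |x - y| < min x y := by
  rw [lt_div_iff₀ hK] at hxy
  have hexpand : (K - 1) * |x - y| = |x - y| * K - |x - y| := by ring
  have : x - y ≤ |x - y| := le_abs_self _
  exact lt_min (by linarith [abs_nonneg (x - y)]) (by linarith)

theorem rpow_abs_sub_le_of_abs_sub_lt_general
    (s K x y : ℝ) (hs0 : 0 < s) (hs1 : s < 1) (hK : 1 < K)
    (hxy : |x - y| < x / K) :
    |x ^ s - y ^ s| ≤ s / (K - 1) ^ (1 - s) * |x - y| ^ s ∧
      (1 + s ^ (1 / (1 - s)) < K → s / (K - 1) ^ (1 - s) < 1) := by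
  have hK1 : 0 < K - 1 := by linarith
  have hmin := mul_abs_sub_lt_min_of_abs_sub_lt (by linarith) hxy
  have hmin_pos : 0 < min x y := lt_of_le_of_lt (by positivity) hmin
  refine ⟨?_, fun hKs => ?_⟩
  · calc |x ^ s - y ^ s| ≤ s * ((min x y) ^ (s - 1) * |x - y|) := by
          rw [← mul_assoc]; exact abs_rpow_sub_rpow_le hs0.le hs1.le hmin_pos
      _ ≤ s * (|x - y| ^ s / (K - 1) ^ (1 - s)) := by
          gcongr
          exact rpow_sub_one_mul_le_of_mul_le hs1.le hK1 (abs_nonneg _) hmin.le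
      _ = s / (K - 1) ^ (1 - s) * |x - y| ^ s := by ring
  · rw [div_lt_one (by positivity)]
    refine (rpow_inv_lt_iff_of_pos hs0.le hK1.le (by linarith)).mp ?_
    rw [← one_div]
    linarith

/-- Inequality (A.10) (lem:scon): if `0 < s < 1`, `K > 1`, `x, y > 0` and `|x - y| < x / K`,
then `|x^s - y^s| ≤ (s / (K-1)^(1-s)) * |x - y|^s`; moreover the constant `s / (K-1)^(1-s)`
is `< 1` as soon as `K > 1 + s^(1/(1-s))`. -/
theorem rpow_abs_sub_le_of_abs_sub_lt
    (s K x y : ℝ) (hs0 : 0 < s) (hs1 : s < 1) (hK : 1 < K)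
    (hx : 0 < x) (hy : 0 < y) (hxy : |x - y| < x / K) :
    |x ^ s - y ^ s| ≤ s / (K - 1) ^ (1 - s) * |x - y| ^ s ∧
      (1 + s ^ (1 / (1 - s)) < K → s / (K - 1) ^ (1 - s) < 1) :=
  rpow_abs_sub_le_of_abs_sub_lt_general s K x y hs0 hs1 hK hxy
end

section
/- For every real K ≥ 1 there exists a constant c = c(K) > 0 such that the following holds. Let η, ξ ∈ ℝ satisfy (1/K)|ξ| ≤ |η| ≤ K|ξ|, let t ∈ ℝ, and let k, n be integers with t ∈ I_{k,η} and t ∈ I_{n,ξ}. Then at least one of the following holds: (a) k = n; (b) |t − η/k| ≥ |η|/(10K·k²) and |t − ξ/n| ≥ |ξ|/(10K·n²); (c) |η − ξ| ≥ c·|η|/|n|. -/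
/-- The critical times: `t_{j,η} = |η|/(j+1) + |η|/(2j(j+1))` for `j ≥ 1`, and
`t_{0,η} = 2|η|`. -/
noncomputable def tcrit (j : ℕ) (η : ℝ) : ℝ :=
  if j = 0 then 2 * |η|
  else |η| / ((j : ℝ) + 1) + |η| / (2 * (j : ℝ) * ((j : ℝ) + 1))

/-- The critical interval `I_{k,η} = [t_{|k|,η}, t_{|k|-1,η}]` when `kη > 0` and
`1 ≤ |k| ≤ ⌊√|η|⌋`, and `∅` otherwise. -/
noncomputable def Icrit (k : ℤ) (η : ℝ) : Set ℝ :=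
  if 0 < (k : ℝ) * η ∧ 1 ≤ k.natAbs ∧ (k.natAbs : ℤ) ≤ ⌊Real.sqrt |η|⌋ then
    Set.Icc (tcrit k.natAbs η) (tcrit (k.natAbs - 1) η)
  else ∅

private lemma icrit_mem {k : ℤ} {η t : ℝ} (h : t ∈ Icrit k η) :
    0 < (k : ℝ) * η ∧ 1 ≤ k.natAbs ∧
      tcrit k.natAbs η ≤ t ∧ t ≤ tcrit (k.natAbs - 1) η := by
  unfold Icrit at h
  split_ifs at h with hc
  · exact ⟨hc.1, hc.2.1, h.1, h.2⟩
  · exact absurd h (Set.notMem_empty t)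

private lemma tcrit_eq {a : ℕ} (ha : 1 ≤ a) (η : ℝ) :
    tcrit a η = |η| * (2*(a:ℝ)+1) / (2*(a:ℝ)*((a:ℝ)+1)) := by
  have h0 : a ≠ 0 := by omega
  have hA : (1:ℝ) ≤ (a:ℝ) := by exact_mod_cast ha
  rw [tcrit, if_neg h0]
  field_simp

private lemma div_abs_eq {k : ℤ} {η : ℝ} (h : 0 < (k:ℝ) * η) :
    η / (k:ℝ) = |η| / |(k:ℝ)| := by
  rcases mul_pos_iff.mp h with ⟨hk, hη⟩ | ⟨hk, hη⟩
  · rw [abs_of_pos hη, abs_of_pos hk]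
  · rw [abs_of_neg hη, abs_of_neg hk, neg_div_neg_eq]

set_option maxHeartbeats 1000000 in
private lemma side {k : ℤ} {η t : ℝ} (h : t ∈ Icrit k η) :
    0 < (k:ℝ)*η ∧ 1 ≤ ((k.natAbs:ℕ):ℝ) ∧
    |η| *(2*(k.natAbs:ℝ)+1)/(2*(k.natAbs:ℝ)*((k.natAbs:ℝ)+1)) ≤ t ∧
    (2 ≤ (k.natAbs:ℝ) → t ≤ |η| *(2*(k.natAbs:ℝ)-1)/(2*((k.natAbs:ℝ)-1)*(k.natAbs:ℝ))) ∧
    t ≤ 5*|η|/(2*(k.natAbs:ℝ)) := by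
  obtain ⟨h1, h2, h3, h4⟩ := icrit_mem h
  have hA : (1:ℝ) ≤ (k.natAbs:ℝ) := by exact_mod_cast h2
  have hA0 : (0:ℝ) < (k.natAbs:ℝ) := by linarith
  have hη : η ≠ 0 := by rintro rfl; simp at h1
  have hH : 0 < |η| := abs_pos.mpr hη
  rw [tcrit_eq h2] at h3
  have h4' : 2 ≤ (k.natAbs:ℝ) → t ≤ |η| *(2*(k.natAbs:ℝ)-1)/(2*((k.natAbs:ℝ)-1)*(k.natAbs:ℝ)) := by
    intro hA2
    have ha2 : 2 ≤ k.natAbs := by exact_mod_cast hA2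
    have h1' : 1 ≤ k.natAbs - 1 := by omega
    rw [tcrit_eq h1'] at h4
    have hc : ((k.natAbs - 1 : ℕ):ℝ) = (k.natAbs:ℝ) - 1 := by
      push_cast [Nat.cast_sub (by omega : 1 ≤ k.natAbs)]; ring
    rw [hc] at h4
    have e1 : 2*((k.natAbs:ℝ)-1)+1 = 2*(k.natAbs:ℝ)-1 := by ring
    have e2 : 2*((k.natAbs:ℝ)-1)*(((k.natAbs:ℝ)-1)+1) = 2*((k.natAbs:ℝ)-1)*(k.natAbs:ℝ) := by ring
    rwa [e1, e2] at h4
  refine ⟨h1, hA, h3, h4', ?_⟩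
  rcases eq_or_lt_of_le h2 with heq | hlt
  · have ha1 : k.natAbs = 1 := heq.symm
    rw [ha1] at h4
    norm_num [tcrit] at h4
    rw [ha1]
    push_cast
    linarith
  · have hA2 : (2:ℝ) ≤ (k.natAbs:ℝ) := by exact_mod_cast hlt
    refine le_trans (h4' hA2) ?_
    rw [div_le_div_iff₀ (by nlinarith : (0:ℝ) < 2*((k.natAbs:ℝ)-1)*(k.natAbs:ℝ)) (by nlinarith : (0:ℝ) < 2*(k.natAbs:ℝ))]
    nlinarith [mul_nonneg hH.le (by nlinarith : (0:ℝ) ≤ 6*(k.natAbs:ℝ)^2 - 8*(k.natAbs:ℝ))]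
private lemma tmono (X p q : ℝ) (hX : 0 ≤ X) (hp : 1 ≤ p) (hpq : p ≤ q) :
    X*(2*q+1)/(2*q*(q+1)) ≤ X*(2*p+1)/(2*p*(p+1)) := by
  have hp0 : 0 < p := by linarith
  have hq0 : 0 < q := by linarith
  rw [div_le_div_iff₀ (by nlinarith) (by nlinarith)]
  have h1 : 0 ≤ q - p := by linarith
  have h2 : (0:ℝ) ≤ 2*p*q+p+q+1 := by nlinarith
  nlinarith [mul_nonneg (mul_nonneg hX h1) h2]

set_option maxHeartbeats 2000000 in
private lemma core (K H X t A B : ℝ) (hK : 1 ≤ K) (hH : 0 < H) (hX : 0 < X)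
    (hA : 1 ≤ A) (hB : 1 ≤ B) (hHK : H ≤ K * X)
    (h3 : X*(2*B+1)/(2*B*(B+1)) ≤ t)
    (h4 : 2 ≤ B → t ≤ X*(2*B-1)/(2*(B-1)*B))
    (h5 : |t - H/A| ≤ H/(10*A^2))
    (hab : A + 1 ≤ B ∨ B + 1 ≤ A) :
    10/(121*K) * (H/B) ≤ |H - X| := by
  have hA0 : 0 < A := by linarith
  have hB0 : 0 < B := by linarith
  have hK0 : 0 < K := by linarith
  have h5' := abs_le.mp h5
  have h5l : H/A - H/(10*A^2) ≤ t := by linarith [h5'.1]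
  have h5u : t ≤ H/A + H/(10*A^2) := by linarith [h5'.2]
  rcases hab with hab | hab
  · -- B ≥ A + 1
    have hB2 : 2 ≤ B := by linarith
    have hmono : X*(2*B-1)/(2*(B-1)*B) ≤ X*(2*A+1)/(2*A*(A+1)) := by
      have h := tmono X A (B-1) hX.le hA (by linarith)
      have e1 : 2*(B-1)+1 = 2*B-1 := by ring
      have e2 : 2*(B-1)*((B-1)+1) = 2*(B-1)*B := by ring
      rwa [e1, e2] at h
    have key : H/A - H/(10*A^2) ≤ X*(2*A+1)/(2*A*(A+1)) :=
      le_trans h5l (le_trans (h4 hB2) hmono)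
    have hXH : H/(5*A) ≤ X - H := by
      have e1 : H/A - H/(10*A^2) = H*(10*A-1)/(10*A^2) := by
        field_simp
      rw [e1, div_le_div_iff₀ (by positivity) (by nlinarith)] at key
      rw [div_le_iff₀ (by positivity)]
      nlinarith [key, mul_pos hA0 hH, mul_pos (mul_pos hA0 hA0) hH,
        mul_nonneg (mul_nonneg hH.le hA0.le) (sub_nonneg.2 hA)]
    have habs : X - H ≤ |H - X| := by rw [abs_sub_comm]; exact le_abs_self _
    have hfin : 10/(121*K) * (H/B) ≤ H/(5*A) := by
      rw [div_mul_div_comm, div_le_div_iff₀ (by positivity) (by positivity)]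
      nlinarith [mul_nonneg (mul_nonneg (sub_nonneg.2 hK) hB0.le) hH.le,
        mul_nonneg (sub_nonneg.2 (by linarith : A ≤ B)) hH.le,
        mul_nonneg hB0.le hH.le, mul_nonneg hA0.le hH.le]
    linarith
  · -- B + 1 ≤ A
    have hA2 : 2 ≤ A := by linarith
    have hmono : X*(2*A-1)/(2*(A-1)*A) ≤ X*(2*B+1)/(2*B*(B+1)) := by
      have h := tmono X B (A-1) hX.le hB (by linarith)
      have e1 : 2*(A-1)+1 = 2*A-1 := by ring
      have e2 : 2*(A-1)*((A-1)+1) = 2*(A-1)*A := by ring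
      rwa [e1, e2] at h
    have key : X*(2*A-1)/(2*(A-1)*A) ≤ H/A + H/(10*A^2) :=
      le_trans (le_trans hmono h3) h5u
    have e1 : H/A + H/(10*A^2) = H*(10*A+1)/(10*A^2) := by
      field_simp
    have hXH : 4*H/(15*A) ≤ H - X := by
      rw [e1, div_le_div_iff₀ (by nlinarith) (by positivity)] at key
      rw [div_le_iff₀ (by positivity)]
      have h6 : (0:ℝ) < 4*A^2 - 2*A := by nlinarith
      nlinarith [key, h6, mul_pos hH hA0, mul_pos hH (mul_pos hA0 hA0)]
    -- bound 5*A ≤ 11*K*B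
    have hlow : X/(2*B) ≤ t := by
      refine le_trans ?_ h3
      rw [div_le_div_iff₀ (by linarith : (0:ℝ) < 2*B) (by nlinarith : (0:ℝ) < 2*B*(B+1))]
      nlinarith [mul_nonneg hX.le (mul_nonneg hB0.le hB0.le), mul_nonneg hX.le hB0.le]
    have htup : t ≤ 11*H/(10*A) := by
      refine le_trans h5u ?_
      rw [e1, div_le_div_iff₀ (by positivity) (by positivity)]
      nlinarith [mul_nonneg (mul_nonneg hH.le hA0.le) (sub_nonneg.2 hA)]
    have hAB : 5*A ≤ 11*K*B := by
      have h1 : X/(2*B) ≤ 11*H/(10*A) := le_trans hlow htup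
      rw [div_le_div_iff₀ (by positivity) (by positivity)] at h1
      -- X * (10*A) ≤ 11*H*(2*B)
      have h2 : H*B ≤ K*X*B := by nlinarith [mul_nonneg (sub_nonneg.2 hHK) hB0.le]
      nlinarith [mul_pos hX hB0, hX]
    have habs : H - X ≤ |H - X| := le_abs_self _
    have hfin : 10/(121*K) * (H/B) ≤ 4*H/(15*A) := by
      rw [div_mul_div_comm, div_le_div_iff₀ (by positivity) (by positivity)]
      nlinarith [mul_nonneg (sub_nonneg.2 hAB) hH.le,
        mul_nonneg (mul_nonneg hK0.le hB0.le) hH.le]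
    linarith

set_option maxHeartbeats 2000000 in
/-- Lemma (lem:wellsep) on the well-separation of critical times: if
`(1/K)|ξ| ≤ |η| ≤ K|ξ|`, `t ∈ I_{k,η}` and `t ∈ I_{n,ξ}`, then (a) `k = n`, or
(b) `t` is far from both resonances, or (c) `η` and `ξ` are well-separated. -/
theorem wellSeparationOfCriticalTimes (K : ℝ) (hK : 1 ≤ K) :
    ∃ c : ℝ, 0 < c ∧
      ∀ (η ξ t : ℝ) (k n : ℤ),
        (1 / K) * |ξ| ≤ |η| → |η| ≤ K * |ξ| →
        t ∈ Icrit k η → t ∈ Icrit n ξ →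
        k = n ∨
          (|η| / (10 * K * (k : ℝ) ^ 2) ≤ |t - η / (k : ℝ)| ∧
            |ξ| / (10 * K * (n : ℝ) ^ 2) ≤ |t - ξ / (n : ℝ)|) ∨
          c * |η| / |(n : ℝ)| ≤ |η - ξ| := by
  have hK0 : (0:ℝ) < K := by linarith
  refine ⟨1/(1000*K^3), by positivity, ?_⟩
  intro η ξ t k n hξη hηξ hkη hnξ
  obtain ⟨hkpos, hA1, hkl, h4η, htopη⟩ := side hkη
  obtain ⟨hnpos, hB1, hnl, h4ξ, htopξ⟩ := side hnξ
  set A : ℝ := (k.natAbs : ℝ) with hAdef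
  set B : ℝ := (n.natAbs : ℝ) with hBdef
  have hA0 : 0 < A := by linarith
  have hB0 : 0 < B := by linarith
  have hη : η ≠ 0 := by rintro rfl; simp at hkpos
  have hξ : ξ ≠ 0 := by rintro rfl; simp at hnpos
  have hH : 0 < |η| := abs_pos.mpr hη
  have hX : 0 < |ξ| := abs_pos.mpr hξ
  have hAk : A = |(k:ℝ)| := by rw [hAdef, Nat.cast_natAbs, Int.cast_abs]
  have hBn : B = |(n:ℝ)| := by rw [hBdef, Nat.cast_natAbs, Int.cast_abs]
  have hXK : |ξ| ≤ K * |η| := by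
    have h := mul_le_mul_of_nonneg_left hξη hK0.le
    rwa [← mul_assoc, mul_one_div_cancel (ne_of_gt hK0), one_mul] at h
  by_cases hkn : k = n
  · exact Or.inl hkn
  right
  by_cases hP : |η| / (10 * K * (k : ℝ) ^ 2) ≤ |t - η / (k : ℝ)|
  · by_cases hQ : |ξ| / (10 * K * (n : ℝ) ^ 2) ≤ |t - ξ / (n : ℝ)|
    · exact Or.inl ⟨hP, hQ⟩
    · -- ξ-side closeness
      right
      push_neg at hQ
      have hξn : ξ / (n:ℝ) = |ξ| / B := by rw [div_abs_eq hnpos, hBn]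
      have hn2 : ((n:ℝ))^2 = B^2 := by rw [hBn, sq_abs]
      have h5ξ : |t - |ξ| / B| ≤ |ξ| / (10 * B^2) := by
        rw [hξn, hn2] at hQ
        refine le_trans hQ.le ?_
        rw [div_le_div_iff₀ (by positivity) (by positivity)]
        nlinarith [mul_nonneg (mul_nonneg (sub_nonneg.2 hK) hX.le) (mul_pos (mul_pos hB0 hB0) (mul_pos hB0 hB0)).le,
          mul_nonneg hX.le (mul_pos hB0 hB0).le, mul_nonneg (sub_nonneg.2 hK) (mul_nonneg hX.le (mul_pos hB0 hB0).le)]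
      by_cases hsgn : 0 < η * ξ
      · have habne : k.natAbs ≠ n.natAbs := by
          intro he
          rcases Int.natAbs_eq_natAbs_iff.mp he with h | h
          · exact hkn h
          · have hkR : (k:ℝ) = -(n:ℝ) := by rw [h]; push_cast; ring
            have h1 : 0 < ((k:ℝ)*(n:ℝ)) * (η*ξ) := by nlinarith [mul_pos hkpos hnpos]
            have h2 : 0 < (k:ℝ)*(n:ℝ) := by
              by_contra hcon
              push_neg at hcon
              nlinarith
            rw [hkR] at h2
            nlinarith [sq_nonneg ((n:ℝ))]
        have habor : A + 1 ≤ B ∨ B + 1 ≤ A := by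
          rcases lt_or_gt_of_ne habne with h | h
          · left
            have h' : k.natAbs + 1 ≤ n.natAbs := h
            rw [hAdef, hBdef]
            exact_mod_cast h'
          · right
            have h' : n.natAbs + 1 ≤ k.natAbs := h
            rw [hAdef, hBdef]
            exact_mod_cast h'
        have heqabs : abs (|ξ| - |η|) ≤ |η - ξ| := by
          rw [abs_sub_comm η ξ]
          exact abs_abs_sub_abs_le_abs_sub ξ η
        have hcore := core K |ξ| |η| t B A hK hX hH hB1 hA1 hXK hkl h4η h5ξ habor.symm
        have h5ξ' := abs_le.mp h5ξ
        have hlowt : 9*|ξ|/(10*B) ≤ t := by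
          have hl1 : |ξ|/B - |ξ|/(10*B^2) ≤ t := by linarith [h5ξ'.1]
          have hl2 : 9*|ξ|/(10*B) ≤ |ξ|/B - |ξ|/(10*B^2) := by
            rw [div_sub_div _ _ (by positivity : B ≠ 0) (by positivity : (10*B^2) ≠ 0),
              div_le_div_iff₀ (by positivity) (by positivity)]
            nlinarith [mul_nonneg (mul_nonneg hX.le hB0.le) (mul_nonneg hB0.le (sub_nonneg.2 hB1))]
          linarith
        have h18 : 18*A*|ξ| ≤ 50*|η| *B := by
          have h1 : 9*|ξ|/(10*B) ≤ 5*|η|/(2*A) := le_trans hlowt htopη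
          rw [div_le_div_iff₀ (by positivity) (by positivity)] at h1
          nlinarith [h1]
        have h9A : 9*A ≤ 25*K*B := by
          nlinarith [hX, mul_nonneg (sub_nonneg.2 hηξ) hB0.le]
        rw [← hBn]
        have hfin : 1/(1000*K^3) * |η| / B ≤ 10/(121*K) * (|ξ|/A) := by
          rw [one_div_mul_eq_div, div_div, div_mul_div_comm,
            div_le_div_iff₀ (by positivity) (by positivity)]
          nlinarith [mul_nonneg (sub_nonneg.2 h9A) (mul_nonneg hK0.le hH.le),
            mul_nonneg (sub_nonneg.2 hηξ) (mul_nonneg (mul_nonneg hK0.le hK0.le) hB0.le),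
            mul_nonneg (mul_nonneg (mul_nonneg hK0.le hK0.le) hK0.le) (mul_nonneg hX.le hB0.le)]
        linarith
      · have hlt : η * ξ < 0 := lt_of_le_of_ne (not_lt.mp hsgn) (mul_ne_zero hη hξ)
        have hop : |η| ≤ |η - ξ| := by
          rcases mul_neg_iff.mp hlt with ⟨h1,h2⟩ | ⟨h1,h2⟩
          · rw [abs_of_pos h1, abs_of_pos (by linarith : 0 < η - ξ)]; linarith
          · rw [abs_of_neg h1, abs_of_neg (by linarith : η - ξ < 0)]; linarith
        rw [← hBn]
        have hch : 1/(1000*K^3) * |η| / B ≤ |η| := by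
          rw [div_le_iff₀ hB0]
          have h1 : 1/(1000*K^3) ≤ 1 := by
            rw [div_le_one (by positivity)]
            nlinarith [mul_nonneg (sub_nonneg.2 hK) (by positivity : (0:ℝ) ≤ K^2+K+1)]
          nlinarith [mul_le_mul_of_nonneg_right h1 hH.le,
            mul_nonneg hH.le (sub_nonneg.2 hB1)]
        linarith
  · -- η-side closeness
    right
    push_neg at hP
    have hηk : η / (k:ℝ) = |η| / A := by rw [div_abs_eq hkpos, hAk]
    have hk2 : ((k:ℝ))^2 = A^2 := by rw [hAk, sq_abs]
    have h5η : |t - |η| / A| ≤ |η| / (10 * A^2) := by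
      rw [hηk, hk2] at hP
      refine le_trans hP.le ?_
      rw [div_le_div_iff₀ (by positivity) (by positivity)]
      nlinarith [mul_nonneg (mul_nonneg (sub_nonneg.2 hK) hH.le) (mul_pos (mul_pos hA0 hA0) (mul_pos hA0 hA0)).le,
        mul_nonneg hH.le (mul_pos hA0 hA0).le, mul_nonneg (sub_nonneg.2 hK) (mul_nonneg hH.le (mul_pos hA0 hA0).le)]
    by_cases hsgn : 0 < η * ξ
    · have habne : k.natAbs ≠ n.natAbs := by
        intro he
        rcases Int.natAbs_eq_natAbs_iff.mp he with h | h
        · exact hkn h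
        · have hkR : (k:ℝ) = -(n:ℝ) := by rw [h]; push_cast; ring
          have h1 : 0 < ((k:ℝ)*(n:ℝ)) * (η*ξ) := by nlinarith [mul_pos hkpos hnpos]
          have h2 : 0 < (k:ℝ)*(n:ℝ) := by
            by_contra hcon
            push_neg at hcon
            nlinarith
          rw [hkR] at h2
          nlinarith [sq_nonneg ((n:ℝ))]
      have habor : A + 1 ≤ B ∨ B + 1 ≤ A := by
        rcases lt_or_gt_of_ne habne with h | h
        · left
          have h' : k.natAbs + 1 ≤ n.natAbs := h
          rw [hAdef, hBdef]
          exact_mod_cast h'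
        · right
          have h' : n.natAbs + 1 ≤ k.natAbs := h
          rw [hAdef, hBdef]
          exact_mod_cast h'
      have heqabs : abs (|η| - |ξ|) ≤ |η - ξ| := abs_abs_sub_abs_le_abs_sub η ξ
      have hcore := core K |η| |ξ| t A B hK hH hX hA1 hB1 hηξ hnl h4ξ h5η habor
      rw [← hBn]
      have hfin : 1/(1000*K^3) * |η| / B ≤ 10/(121*K) * (|η|/B) := by
        rw [mul_div_assoc]
        apply mul_le_mul_of_nonneg_right _ (by positivity)
        rw [div_le_div_iff₀ (by positivity) (by positivity)]
        nlinarith [hK0, sq_nonneg K, sq_nonneg (K-1), mul_pos hK0 hK0,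
          mul_nonneg (mul_nonneg (sub_nonneg.2 hK) hK0.le) (sub_nonneg.2 hK)]
      linarith
    · have hlt : η * ξ < 0 := lt_of_le_of_ne (not_lt.mp hsgn) (mul_ne_zero hη hξ)
      have hop : |η| ≤ |η - ξ| := by
        rcases mul_neg_iff.mp hlt with ⟨h1,h2⟩ | ⟨h1,h2⟩
        · rw [abs_of_pos h1, abs_of_pos (by linarith : 0 < η - ξ)]; linarith
        · rw [abs_of_neg h1, abs_of_neg (by linarith : η - ξ < 0)]; linarith
      rw [← hBn]
      have hch : 1/(1000*K^3) * |η| / B ≤ |η| := by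
        rw [div_le_iff₀ hB0]
        have h1 : 1/(1000*K^3) ≤ 1 := by
          rw [div_le_one (by positivity)]
          nlinarith [mul_nonneg (sub_nonneg.2 hK) (by positivity : (0:ℝ) ≤ K^2+K+1)]
        nlinarith [mul_le_mul_of_nonneg_right h1 hH.le,
          mul_nonneg hH.le (sub_nonneg.2 hB1)]
      linarith
end

section
/- There exists an absolute constant C > 0 such that for every nonzero integer k, all integers l, l', all real numbers η, ξ, and every real t ≥ 1: ⟨t/⟨ξ, l'⟩⟩ ≤ C · (|k| + |η − k·t| + |l|) · ⟨η − ξ, l − l'⟩. -/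
/-- The Japanese bracket `⟨x⟩ = (1 + x²)^{1/2}`. -/
noncomputable def jb (x : ℝ) : ℝ := Real.sqrt (1 + x ^ 2)

/-- The two-variable Japanese bracket `⟨a,b⟩ = (1 + (|a| + |b|)²)^{1/2}`. -/
noncomputable def jb2 (a b : ℝ) : ℝ := Real.sqrt (1 + (|a| + |b|) ^ 2)

lemma jb2_ge_one (a b : ℝ) : 1 ≤ jb2 a b := by
  have h : Real.sqrt 1 ≤ Real.sqrt (1 + (|a| + |b|) ^ 2) :=
    Real.sqrt_le_sqrt (le_add_of_nonneg_right (by positivity))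
  simpa [jb2] using h

lemma jb2_ge_abs (a b : ℝ) : |a| ≤ jb2 a b := by
  have h : Real.sqrt (a ^ 2) ≤ Real.sqrt (1 + (|a| + |b|) ^ 2) := by
    apply Real.sqrt_le_sqrt
    nlinarith [abs_nonneg a, abs_nonneg b, sq_abs a]
  simpa [jb2, Real.sqrt_sq_eq_abs] using h

/-- Inequality (ineq:ratlongtime) of Lemma (lem:MainFreqRat), 'for absorbing long-time
losses': for `k ≠ 0` and `t ≥ 1`,
`⟨t/⟨ξ,l'⟩⟩ ≤ C (|k| + |η - kt| + |l|) ⟨η - ξ, l - l'⟩`. -/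
theorem ratlongtime :
    ∃ C : ℝ, 0 < C ∧
      ∀ (k l l' : ℤ) (η ξ t : ℝ), k ≠ 0 → 1 ≤ t →
        jb (t / jb2 ξ (l' : ℝ)) ≤
          C * (|(k : ℝ)| + |η - (k : ℝ) * t| + |(l : ℝ)|) *
            jb2 (η - ξ) ((l : ℝ) - (l' : ℝ)) := by
  refine ⟨3, by norm_num, ?_⟩
  intro k l l' η ξ t hk ht
  set B := jb2 ξ (l' : ℝ) with hB
  set J := jb2 (η - ξ) ((l : ℝ) - (l' : ℝ)) with hJ
  have hB1 : 1 ≤ B := jb2_ge_one _ _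
  have hBξ : |ξ| ≤ B := jb2_ge_abs _ _
  have hJ1 : 1 ≤ J := jb2_ge_one _ _
  have hJa : |η - ξ| ≤ J := jb2_ge_abs _ _
  have hk1 : (1:ℝ) ≤ |(k : ℝ)| := by
    rw [← Int.cast_abs]
    exact_mod_cast Int.one_le_abs hk
  have hB0 : (0:ℝ) < B := lt_of_lt_of_le one_pos hB1
  have ht0 : (0:ℝ) ≤ t := le_trans zero_le_one ht
  have hx : 0 ≤ t / B := div_nonneg ht0 hB0.le
  -- jb(t/B) ≤ 1 + t/B
  have h1 : jb (t / B) ≤ 1 + t / B := by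
    rw [jb]
    have := Real.sqrt_le_sqrt (show 1 + (t/B)^2 ≤ (1 + t/B)^2 by nlinarith)
    rwa [Real.sqrt_sq (by linarith)] at this
  -- t ≤ |η - kt| + |η - ξ| + |ξ|
  have h2 : t ≤ |η - (k:ℝ) * t| + |η - ξ| + |ξ| := by
    have e0 : t ≤ |(k:ℝ) * t| := by
      rw [abs_mul, abs_of_nonneg ht0]
      nlinarith
    have e1 : |(k:ℝ)*t| - |η| ≤ |(k:ℝ)*t - η| := abs_sub_abs_le_abs_sub _ _
    have e2 : |η| - |ξ| ≤ |η - ξ| := abs_sub_abs_le_abs_sub _ _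
    have e3 : |(k:ℝ)*t - η| = |η - (k:ℝ)*t| := abs_sub_comm _ _
    linarith
  -- t/B ≤ |η - kt| + |η - ξ| + 1
  have h3 : t / B ≤ |η - (k:ℝ) * t| + |η - ξ| + 1 := by
    rw [div_le_iff₀ hB0]
    have h4 : |ξ| ≤ B * 1 := by linarith
    nlinarith [abs_nonneg (η - (k:ℝ)*t), abs_nonneg (η - ξ)]
  have hA : (0:ℝ) ≤ |η - (k:ℝ)*t| := abs_nonneg _
  have hL : (0:ℝ) ≤ |(l:ℝ)| := abs_nonneg _
  calc jb (t / B) ≤ 1 + t / B := h1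
    _ ≤ 2 + |η - (k:ℝ)*t| + |η - ξ| := by linarith
    _ ≤ 3 * (|(k : ℝ)| + |η - (k : ℝ) * t| + |(l : ℝ)|) * J := by nlinarith
end

section
/- There exists an absolute constant C > 0 such that for every nonzero integer k, all integers l, l', and all real numbers η, ξ, t: ( |k| ⟨l⟩ / (k² + l² + (η − k·t)²) )^{1/2} ≤ C · ( |k| ⟨l'⟩ / (k² + (l')² + (ξ − k·t)²) )^{1/2} · ⟨η − ξ, l − l'⟩^{3/2}. -/
set_option maxHeartbeats 1000000 in
/-- Inequality (ineq:dtNBasic) of Lemma (lem:CKwFreqRat): there is an absolute `C > 0`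
such that for every nonzero integer `k`, integers `l, l'` and reals `η, ξ, t`,
`(|k|⟨l⟩ / (k² + l² + (η - kt)²))^{1/2} ≤
  C (|k|⟨l'⟩ / (k² + l'² + (ξ - kt)²))^{1/2} ⟨η-ξ, l-l'⟩^{3/2}`. -/
theorem dtwL_freq_ratio :
    ∃ C : ℝ, 0 < C ∧
      ∀ (k l l' : ℤ) (η ξ t : ℝ), k ≠ 0 →
        Real.sqrt (|(k : ℝ)| * jb (l : ℝ) /
            ((k : ℝ) ^ 2 + (l : ℝ) ^ 2 + (η - (k : ℝ) * t) ^ 2)) ≤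
          C * Real.sqrt (|(k : ℝ)| * jb (l' : ℝ) /
              ((k : ℝ) ^ 2 + (l' : ℝ) ^ 2 + (ξ - (k : ℝ) * t) ^ 2)) *
            jb2 (η - ξ) ((l : ℝ) - (l' : ℝ)) ^ ((3 : ℝ) / 2) := by
  refine ⟨2, by norm_num, ?_⟩
  intro k l l' η ξ t hk
  have hk1 : (1 : ℝ) ≤ |(k : ℝ)| := by
    have := Int.one_le_abs hk
    exact_mod_cast this
  have hk2 : (1 : ℝ) ≤ (k : ℝ) ^ 2 := by nlinarith [sq_abs ((k : ℝ))]
  set d : ℝ := |η - ξ| + |(l : ℝ) - (l' : ℝ)| with hd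
  have hdnn : 0 ≤ d := by positivity
  set J : ℝ := jb2 (η - ξ) ((l : ℝ) - (l' : ℝ)) with hJdef
  have hJnn : 0 ≤ J := Real.sqrt_nonneg _
  have hJsq : J ^ 2 = 1 + d ^ 2 := Real.sq_sqrt (by positivity)
  have hJ1 : 1 ≤ J := by nlinarith
  set D1 : ℝ := (k : ℝ) ^ 2 + (l : ℝ) ^ 2 + (η - (k : ℝ) * t) ^ 2 with hD1def
  set D2 : ℝ := (k : ℝ) ^ 2 + (l' : ℝ) ^ 2 + (ξ - (k : ℝ) * t) ^ 2 with hD2def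
  have hD1 : (1 : ℝ) ≤ D1 := by nlinarith [sq_nonneg ((l : ℝ)), sq_nonneg (η - (k : ℝ) * t)]
  have hD2 : (1 : ℝ) ≤ D2 := by nlinarith [sq_nonneg ((l' : ℝ)), sq_nonneg (ξ - (k : ℝ) * t)]
  have hD1pos : (0 : ℝ) < D1 := lt_of_lt_of_le one_pos hD1
  have hD2pos : (0 : ℝ) < D2 := lt_of_lt_of_le one_pos hD2
  have hLnn : 0 ≤ jb (l : ℝ) := Real.sqrt_nonneg _
  have hL'nn : 0 ≤ jb (l' : ℝ) := Real.sqrt_nonneg _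
  have hKnn : (0 : ℝ) ≤ |(k : ℝ)| := abs_nonneg _
  clear_value d J D1 D2
  -- step 1 : jb l ≤ √2 * jb l' * J
  have h1 : jb (l : ℝ) ≤ Real.sqrt 2 * jb (l' : ℝ) * J := by
    rw [hJdef, jb, jb, jb2, ← Real.sqrt_mul (by norm_num : (0:ℝ) ≤ 2),
      ← Real.sqrt_mul (by positivity)]
    apply Real.sqrt_le_sqrt
    have habs : |(l : ℝ)| ≤ |(l' : ℝ)| + |(l : ℝ) - (l' : ℝ)| := by
      have := abs_sub_abs_le_abs_sub (l : ℝ) (l' : ℝ)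
      linarith
    have hp : |(l : ℝ)| ^ 2 ≤ (|(l' : ℝ)| + |(l : ℝ) - (l' : ℝ)|) ^ 2 :=
      pow_le_pow_left₀ (abs_nonneg _) habs 2
    nlinarith [hp, sq_abs ((l : ℝ)), sq_abs ((l' : ℝ)), abs_nonneg ((l : ℝ) - (l' : ℝ)),
      abs_nonneg ((l' : ℝ)), abs_nonneg (η - ξ),
      mul_nonneg (abs_nonneg (η - ξ)) (abs_nonneg ((l : ℝ) - (l' : ℝ))),
      sq_nonneg (|(l' : ℝ)| - |(l : ℝ) - (l' : ℝ)|),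
      sq_abs ((l : ℝ) - (l' : ℝ))]
  -- step 2 : D2 ≤ 2 * D1 * J²
  have h2 : D2 ≤ 2 * D1 * J ^ 2 := by
    rw [hJsq]
    have hd2 : (η - ξ) ^ 2 + ((l : ℝ) - (l' : ℝ)) ^ 2 ≤ d ^ 2 := by
      rw [hd]
      nlinarith [sq_abs (η - ξ), sq_abs ((l : ℝ) - (l' : ℝ)),
        mul_nonneg (abs_nonneg (η - ξ)) (abs_nonneg ((l : ℝ) - (l' : ℝ)))]
    have ha : (l' : ℝ) ^ 2 ≤ 2 * (l : ℝ) ^ 2 + 2 * ((l : ℝ) - (l' : ℝ)) ^ 2 := by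
      nlinarith [sq_nonneg ((l : ℝ) + ((l : ℝ) - (l' : ℝ)))]
    have hb : (ξ - (k : ℝ) * t) ^ 2 ≤ 2 * (η - (k : ℝ) * t) ^ 2 + 2 * (η - ξ) ^ 2 := by
      nlinarith [sq_nonneg ((η - (k : ℝ) * t) + (η - ξ))]
    have hc : D2 ≤ 2 * D1 + 2 * d ^ 2 := by
      rw [hD1def, hD2def]; nlinarith [ha, hb, hd2, hk2]
    nlinarith [hc, mul_nonneg (sub_nonneg.2 hD1) (sq_nonneg d)]
  -- combine
  have hfinal : jb (l : ℝ) * D2 ≤ 4 * jb (l' : ℝ) * J ^ 3 * D1 := by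
    have hs2 : Real.sqrt 2 ≤ 2 := by
      nlinarith [Real.sq_sqrt (show (0:ℝ) ≤ 2 by norm_num), Real.sqrt_nonneg 2]
    calc jb (l : ℝ) * D2 ≤ (Real.sqrt 2 * jb (l' : ℝ) * J) * (2 * D1 * J ^ 2) :=
          mul_le_mul h1 h2 (le_of_lt (lt_of_lt_of_le one_pos hD2))
            (mul_nonneg (mul_nonneg (Real.sqrt_nonneg 2) hL'nn) hJnn)
      _ = (Real.sqrt 2 * 2) * (jb (l' : ℝ) * J ^ 3 * D1) := by ring
      _ ≤ 4 * (jb (l' : ℝ) * J ^ 3 * D1) := by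
          apply mul_le_mul_of_nonneg_right _
            (mul_nonneg (mul_nonneg hL'nn (pow_nonneg hJnn 3)) hD1pos.le)
          nlinarith
      _ = 4 * jb (l' : ℝ) * J ^ 3 * D1 := by ring
  have hkey : |(k : ℝ)| * jb (l : ℝ) / D1 ≤ 4 * (|(k : ℝ)| * jb (l' : ℝ) / D2) * J ^ 3 := by
    have hre : 4 * (|(k : ℝ)| * jb (l' : ℝ) / D2) * J ^ 3
        = (4 * |(k : ℝ)| * (jb (l' : ℝ) * J ^ 3)) / D2 := by ring
    rw [hre, div_le_div_iff₀ hD1pos hD2pos]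
    nlinarith [mul_le_mul_of_nonneg_left hfinal hKnn]
  -- sqrt manipulation
  have hBnn : 0 ≤ |(k : ℝ)| * jb (l' : ℝ) / D2 :=
    div_nonneg (mul_nonneg hKnn hL'nn) hD2pos.le
  have hJ32 : Real.sqrt (J ^ 3) = J ^ ((3 : ℝ) / 2) := by
    rw [Real.sqrt_eq_rpow, ← Real.rpow_natCast J 3, ← Real.rpow_mul hJnn]
    norm_num
  calc Real.sqrt (|(k : ℝ)| * jb (l : ℝ) / D1)
      ≤ Real.sqrt (4 * (|(k : ℝ)| * jb (l' : ℝ) / D2) * J ^ 3) := Real.sqrt_le_sqrt hkey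
    _ = 2 * Real.sqrt (|(k : ℝ)| * jb (l' : ℝ) / D2) * J ^ ((3 : ℝ) / 2) := by
        rw [show 4 * (|(k : ℝ)| * jb (l' : ℝ) / D2) * J ^ 3
            = 4 * ((|(k : ℝ)| * jb (l' : ℝ) / D2) * J ^ 3) by ring,
          Real.sqrt_mul (by norm_num : (0:ℝ) ≤ 4), Real.sqrt_mul hBnn,
          show Real.sqrt 4 = 2 by
            rw [show (4:ℝ) = 2 ^ 2 by norm_num, Real.sqrt_sq (by norm_num : (0:ℝ) ≤ 2)],
          hJ32]
        ring
end

section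
/- For every real p there exists a constant C = C(p) > 0 such that for every real t ≥ 1, every real η, ξ, and all integers k, k', l, l' with k ≠ 0, k' ≠ 0, and k ≠ k': [ (|k| + |η − k·t| + |l|) · (|k| + |ξ − k'·t| + |l'|) / ((k')² + (l')² + (ξ − k'·t)²) ] · ⟨t/⟨ξ, l'⟩⟩^p ≤ C · ( ⟨t⟩ + ⟨t/⟨ξ, l'⟩⟩^p ) · ⟨k − k', η − ξ, l − l'⟩². -/
/-- The three-variable Japanese bracket `⟨a,b,c⟩ = (1 + (|a| + |b| + |c|)²)^{1/2}`. -/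
noncomputable def jb3 (a b c : ℝ) : ℝ := Real.sqrt (1 + (|a| + |b| + |c|) ^ 2)

private lemma poly_aux {M q : ℝ} (hM1 : 1 ≤ M) (hq0 : 0 < q) :
    3*(1+M) + 6*(3+q)*M*(1+M) ≤ (42 + 12*q)*(1 + M^2) := by
  nlinarith [mul_nonneg (mul_nonneg (by linarith : (0:ℝ) ≤ 24 + 6*q) (by linarith : (0:ℝ) ≤ M))
    (by linarith : (0:ℝ) ≤ M - 1), hq0]

set_option maxHeartbeats 1000000 in
/-- The first inequality of (ineq:AikDelL2D) in Lemma (lem:MainFreqRat), for the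
three-dimensional echo terms: for every real `p` there is `C = C(p) > 0` such that for
`t ≥ 1`, nonzero integers `k ≠ k'`,
`[(|k| + |η - kt| + |l|)(|k| + |ξ - k't| + |l'|) / ((k')² + (l')² + (ξ - k't)²)]
  ⟨t/⟨ξ,l'⟩⟩^p ≤ C (⟨t⟩ + ⟨t/⟨ξ,l'⟩⟩^p) ⟨k-k', η-ξ, l-l'⟩²`. -/
theorem AikDelL2D_first (p : ℝ) :
    ∃ C : ℝ, 0 < C ∧
      ∀ (t η ξ : ℝ) (k k' l l' : ℤ), 1 ≤ t → k ≠ 0 → k' ≠ 0 → k ≠ k' →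
        (|(k : ℝ)| + |η - (k : ℝ) * t| + |(l : ℝ)|) *
            (|(k : ℝ)| + |ξ - (k' : ℝ) * t| + |(l' : ℝ)|) /
            ((k' : ℝ) ^ 2 + (l' : ℝ) ^ 2 + (ξ - (k' : ℝ) * t) ^ 2) *
            jb (t / jb2 ξ (l' : ℝ)) ^ p ≤
          C * (jb t + jb (t / jb2 ξ (l' : ℝ)) ^ p) *
            jb3 ((k : ℝ) - (k' : ℝ)) (η - ξ) ((l : ℝ) - (l' : ℝ)) ^ 2 := by
  refine ⟨42 + 12 * Real.sqrt 5 ^ p, by positivity, ?_⟩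
  intro t η ξ k k' l l' ht hk hk' hkk'
  have ht0 : (0:ℝ) < t := lt_of_lt_of_le one_pos ht
  have hjbpos : 0 < jb (t / jb2 ξ (l':ℝ)) := by
    simp only [jb]; positivity
  -- replace key subexpressions by opaque variables
  obtain ⟨q, hq⟩ : ∃ q : ℝ, q = Real.sqrt 5 ^ p := ⟨_, rfl⟩
  obtain ⟨D, hDdef⟩ : ∃ d : ℝ, d = (k':ℝ)^2 + (l':ℝ)^2 + (ξ - (k':ℝ)*t)^2 := ⟨_, rfl⟩
  obtain ⟨J, hJdef⟩ : ∃ j : ℝ, j = jb (t / jb2 ξ (l':ℝ)) ^ p := ⟨_, rfl⟩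
  obtain ⟨M, hMdef⟩ : ∃ m : ℝ, m = |(k:ℝ) - (k':ℝ)| + |η - ξ| + |(l:ℝ) - (l':ℝ)| := ⟨_, rfl⟩
  rw [← hq, ← hDdef, ← hJdef]
  have hq0 : 0 < q := by rw [hq]; exact Real.rpow_pos_of_pos (by positivity) p
  have hk'1 : (1:ℝ) ≤ |(k':ℝ)| := by
    have h := Int.one_le_abs hk'
    have h2 : (1:ℝ) ≤ |((k':ℤ):ℝ)| := by exact_mod_cast h
    simpa using h2
  have hD1 : (1:ℝ) ≤ D := by
    rw [hDdef]
    nlinarith [sq_abs (k':ℝ), sq_nonneg (l':ℝ), sq_nonneg (ξ - (k':ℝ)*t)]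
  have hD0 : (0:ℝ) < D := lt_of_lt_of_le one_pos hD1
  obtain ⟨s, hsdef⟩ : ∃ x : ℝ, x = Real.sqrt (3*D) := ⟨_, rfl⟩
  have hs2 : s^2 = 3*D := by rw [hsdef]; exact Real.sq_sqrt (by positivity)
  have hs0 : (0:ℝ) ≤ s := hsdef ▸ Real.sqrt_nonneg _
  have hs1 : (1:ℝ) ≤ s := by nlinarith
  -- |k'| + |ξ - k't| + |l'| ≤ s
  have hB' : |(k':ℝ)| + |ξ - (k':ℝ)*t| + |(l':ℝ)| ≤ s := by
    have hsq : (|(k':ℝ)| + |ξ - (k':ℝ)*t| + |(l':ℝ)|)^2 ≤ 3*D := by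
      rw [hDdef]
      nlinarith [sq_abs (k':ℝ), sq_abs (ξ - (k':ℝ)*t), sq_abs (l':ℝ),
        sq_nonneg (|(k':ℝ)| - |ξ - (k':ℝ)*t|), sq_nonneg (|(k':ℝ)| - |(l':ℝ)|),
        sq_nonneg (|ξ - (k':ℝ)*t| - |(l':ℝ)|)]
    rw [hsdef]
    calc |(k':ℝ)| + |ξ - (k':ℝ)*t| + |(l':ℝ)|
        = Real.sqrt ((|(k':ℝ)| + |ξ - (k':ℝ)*t| + |(l':ℝ)|)^2) :=
          (Real.sqrt_sq (by positivity)).symm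
      _ ≤ Real.sqrt (3*D) := Real.sqrt_le_sqrt hsq
  have hM0 : (0:ℝ) ≤ M := by rw [hMdef]; positivity
  have hM1 : (1:ℝ) ≤ M := by
    have h : (1:ℤ) ≤ |k - k'| := Int.one_le_abs (sub_ne_zero.mpr hkk')
    have h2 : (1:ℝ) ≤ |((k:ℝ) - (k':ℝ))| := by
      have : (1:ℝ) ≤ |(((k - k'):ℤ):ℝ)| := by exact_mod_cast h
      simpa [Int.cast_sub] using this
    rw [hMdef]
    have := abs_nonneg (η - ξ); have := abs_nonneg ((l:ℝ) - (l':ℝ)); linarith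
  have hJ0 : 0 < J := by rw [hJdef]; exact Real.rpow_pos_of_pos hjbpos p
  have hjbt0 : 0 < jb t := by simp only [jb]; positivity
  have hjbt : t ≤ jb t := by
    simp only [jb]
    calc t = Real.sqrt (t^2) := (Real.sqrt_sq ht0.le).symm
      _ ≤ Real.sqrt (1 + t^2) := Real.sqrt_le_sqrt (by linarith)
  have hjb2_0 : 0 < jb2 ξ (l':ℝ) := by simp only [jb2]; positivity
  have hjb2_xi : |ξ| ≤ jb2 ξ (l':ℝ) := by
    simp only [jb2]
    calc |ξ| = Real.sqrt (|ξ|^2) := (Real.sqrt_sq (abs_nonneg ξ)).symm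
      _ ≤ Real.sqrt (1 + (|ξ| + |(l':ℝ)|)^2) :=
        Real.sqrt_le_sqrt (by nlinarith [abs_nonneg ξ, abs_nonneg (l':ℝ)])
  -- t ≤ s + ⟨ξ, l'⟩
  have hts : t ≤ s + jb2 ξ (l':ℝ) := by
    have h1 : t ≤ |(k':ℝ) * t| := by
      rw [abs_mul, abs_of_pos ht0]; nlinarith
    have h2 : |(k':ℝ) * t| ≤ |ξ - (k':ℝ)*t| + |ξ| := by
      calc |(k':ℝ) * t| = |((k':ℝ)*t - ξ) + ξ| := by congr 1; ring
        _ ≤ |(k':ℝ)*t - ξ| + |ξ| := abs_add_le _ _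
        _ = |ξ - (k':ℝ)*t| + |ξ| := by rw [abs_sub_comm]
    have h3 : |ξ - (k':ℝ)*t| ≤ s := by
      have := abs_nonneg (k':ℝ); have := abs_nonneg (l':ℝ); linarith
    linarith
  -- key estimate on t·J
  have key : 3*(t*J) ≤ (9 + 3*q) * (s * (jb t + J)) := by
    rcases le_or_gt t (2*s) with h | h
    · have h1 : t*J ≤ 2*s*J := mul_le_mul_of_nonneg_right h hJ0.le
      have h2 : s*J ≤ s*(jb t + J) :=
        mul_le_mul_of_nonneg_left (by linarith) hs0
      have h3 : 0 ≤ s * (jb t + J) := mul_nonneg hs0 (by linarith)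
      have h4 : 0 ≤ q * (s * (jb t + J)) := mul_nonneg hq0.le h3
      linarith
    · have h2 : t ≤ 2 * jb2 ξ (l':ℝ) := by linarith
      have hx : t / jb2 ξ (l':ℝ) ≤ 2 := by
        rw [div_le_iff₀ hjb2_0]; linarith
      have hx0 : 0 ≤ t / jb2 ξ (l':ℝ) := by positivity
      have hjbx : jb (t / jb2 ξ (l':ℝ)) ≤ Real.sqrt 5 := by
        simp only [jb]; exact Real.sqrt_le_sqrt (by nlinarith)
      have hjbx1 : 1 ≤ jb (t / jb2 ξ (l':ℝ)) := by
        simp only [jb]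
        calc (1:ℝ) = Real.sqrt 1 := by simp
          _ ≤ Real.sqrt (1 + (t / jb2 ξ (l':ℝ))^2) :=
            Real.sqrt_le_sqrt (by nlinarith [sq_nonneg (t / jb2 ξ (l':ℝ))])
      have hJle : J ≤ 1 + q := by
        rcases le_or_gt 0 p with hp | hp
        · have h4 := Real.rpow_le_rpow (le_trans zero_le_one hjbx1) hjbx hp
          rw [hJdef, hq]; linarith
        · have h4 := Real.rpow_le_one_of_one_le_of_nonpos hjbx1 hp.le
          rw [hJdef]; linarith
      have hXt : t ≤ s * (jb t + J) := by
        have h5 : (1:ℝ) * t ≤ s * (jb t + J) :=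
          mul_le_mul hs1 (by linarith) ht0.le hs0
        linarith
      linarith [mul_le_mul_of_nonneg_left hXt (by positivity : (0:ℝ) ≤ 3 + 3*q),
        mul_le_mul_of_nonneg_left hJle (by linarith : (0:ℝ) ≤ 3*t),
        mul_nonneg hs0 (by linarith : (0:ℝ) ≤ jb t + J)]
  -- bound on A
  have ha1 : |(k:ℝ)| ≤ |(k:ℝ) - (k':ℝ)| + |(k':ℝ)| := by
    have := abs_sub_abs_le_abs_sub (k:ℝ) (k':ℝ); linarith
  have ha3 : |(l:ℝ)| ≤ |(l:ℝ) - (l':ℝ)| + |(l':ℝ)| := by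
    have := abs_sub_abs_le_abs_sub (l:ℝ) (l':ℝ); linarith
  have ha2 : |η - (k:ℝ)*t| ≤ |η - ξ| + |ξ - (k':ℝ)*t| + |(k:ℝ) - (k':ℝ)| * t := by
    calc |η - (k:ℝ)*t|
        = |(η - ξ) + ((ξ - (k':ℝ)*t) + ((k':ℝ) - (k:ℝ)) * t)| := by congr 1; ring
      _ ≤ |η - ξ| + |(ξ - (k':ℝ)*t) + ((k':ℝ) - (k:ℝ)) * t| := abs_add_le _ _
      _ ≤ |η - ξ| + (|ξ - (k':ℝ)*t| + |((k':ℝ) - (k:ℝ)) * t|) := by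
          linarith [abs_add_le (ξ - (k':ℝ)*t) (((k':ℝ) - (k:ℝ)) * t)]
      _ = |η - ξ| + |ξ - (k':ℝ)*t| + |(k:ℝ) - (k':ℝ)| * t := by
          rw [abs_mul, abs_of_pos ht0, abs_sub_comm ((k':ℝ)) ((k:ℝ))]; ring
  have hA : |(k:ℝ)| + |η - (k:ℝ)*t| + |(l:ℝ)| ≤ s + 2*t*M := by
    rw [hMdef]
    linarith [ha1, ha2, ha3, hB',
      mul_nonneg (by linarith : (0:ℝ) ≤ t - 1) (abs_nonneg ((k:ℝ) - (k':ℝ))),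
      mul_nonneg (by linarith : (0:ℝ) ≤ 2*t - 1) (abs_nonneg (η - ξ)),
      mul_nonneg (by linarith : (0:ℝ) ≤ 2*t - 1) (abs_nonneg ((l:ℝ) - (l':ℝ)))]
  have hB : |(k:ℝ)| + |ξ - (k':ℝ)*t| + |(l':ℝ)| ≤ s*(1+M) := by
    have h5 : |(k:ℝ) - (k':ℝ)| ≤ M := by
      rw [hMdef]
      have := abs_nonneg (η - ξ); have := abs_nonneg ((l:ℝ) - (l':ℝ)); linarith
    linarith [ha1, hB', h5, mul_nonneg (by linarith : (0:ℝ) ≤ s - 1) hM0]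
  -- put it together
  have hB0 : (0:ℝ) ≤ |(k:ℝ)| + |ξ - (k':ℝ)*t| + |(l':ℝ)| := by positivity
  rw [div_mul_eq_mul_div, div_le_iff₀ hD0]
  have hjb3 : jb3 ((k:ℝ) - (k':ℝ)) (η - ξ) ((l:ℝ) - (l':ℝ)) ^ 2 = 1 + M^2 := by
    simp only [jb3]
    rw [Real.sq_sqrt (by positivity), ← hMdef]
  rw [hjb3]
  have step1 : (|(k:ℝ)| + |η - (k:ℝ)*t| + |(l:ℝ)|) *
      (|(k:ℝ)| + |ξ - (k':ℝ)*t| + |(l':ℝ)|) * J ≤ ((s + 2*t*M) * (s*(1+M))) * J := by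
    apply mul_le_mul_of_nonneg_right _ hJ0.le
    exact mul_le_mul hA hB hB0 (by positivity)
  have step2 : ((s + 2*t*M) * (s*(1+M))) * J
      = 3*D*(1+M)*J + (2*M*(1+M)*s/3)*(3*(t*J)) := by
    linear_combination ((1+M)*J) * hs2
  have step3 : 3*D*(1+M)*J ≤ 3*D*(1+M)*(jb t + J) := by
    apply mul_le_mul_of_nonneg_left (by linarith)
    exact mul_nonneg (by linarith) (by linarith)
  have step4 : (2*M*(1+M)*s/3)*(3*(t*J))
      ≤ (2*M*(1+M)*s/3)*((9 + 3*q) * (s * (jb t + J))) := by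
    apply mul_le_mul_of_nonneg_left key
    have h6 : (0:ℝ) ≤ 2*M*(1+M)*s :=
      mul_nonneg (mul_nonneg (by linarith) (by linarith)) hs0
    linarith
  have step5 : (2*M*(1+M)*s/3)*((9 + 3*q) * (s * (jb t + J)))
      = 6*(3+q)*M*(1+M)*(D*(jb t + J)) := by
    linear_combination (2*M*(1+M)*(3+q)*(jb t + J)) * hs2
  have hpoly : 3*(1+M) + 6*(3+q)*M*(1+M) ≤ (42 + 12*q)*(1 + M^2) := poly_aux hM1 hq0
  have hDT0 : (0:ℝ) ≤ D*(jb t + J) := mul_nonneg hD0.le (by linarith)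
  have hfin : (3*(1+M) + 6*(3+q)*M*(1+M)) * (D*(jb t + J))
      ≤ ((42 + 12*q)*(1 + M^2)) * (D*(jb t + J)) :=
    mul_le_mul_of_nonneg_right hpoly hDT0
  linarith [step1, step2, step3, step4, step5, hfin]
end
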